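/- The row language of DC₁ saturates D^Row: every word w ∈ D^Row occurs as a row of some picture in DC₁. Specifically, for every w ∈ D^Row of length n there exist Dyck words w₁, w₂, w₃ ∈ D^Row of length n such that the picture with rows w₁, w₂, w, w₃ (in this order) belongs to DC₁. -/

import Mathlib

/-- The alphabet Δ₁ = {a, b, c, d}. -/
inductive Del : Type
  | a | b | c | d
deriving DecidableEq

/-- Row cancellation: pairs [a,b] and [c,d]. -/
def rowStep (w w' : List Del) : Prop :=
  ∃ (u v : List Del),
    (w = u ++ [Del.a, Del.b] ++ v ∨ w = u ++ [Del.c, Del.d] ++ v) ∧ w' = u ++ v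

/-- The row Dyck language D^Row. -/
def DRow (w : List Del) : Prop := Relation.ReflTransGen rowStep w []

/-- Column cancellation: pairs [a,c] and [b,d]. -/
def colStep (w w' : List Del) : Prop :=
  ∃ (u v : List Del),
    (w = u ++ [Del.a, Del.c] ++ v ∨ w = u ++ [Del.b, Del.d] ++ v) ∧ w' = u ++ v

/-- The column Dyck language D^Col. -/
def DCol (w : List Del) : Prop := Relation.ReflTransGen colStep w []

/-- Row i (of length n) of a picture. -/
def row (p : ℕ → ℕ → Del) (n i : ℕ) : List Del := (List.range n).map (p i)

/-- Column j (of length m) of a picture. -/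
def col (p : ℕ → ℕ → Del) (m j : ℕ) : List Del :=
  (List.range m).map (fun i => p i j)

/-- The Dyck crossword language DC₁: nonempty pictures all of whose rows
are in D^Row and all of whose columns are in D^Col. -/
def DC (m n : ℕ) (p : ℕ → ℕ → Del) : Prop :=
  1 ≤ m ∧ 1 ≤ n ∧ (∀ i < m, DRow (row p n i)) ∧ (∀ j < n, DCol (col p m j))

/-!
Letter maps that send each of the row pairs `[a,b]`, `[c,d]` to one of them are morphisms of
`D^Row`. Apply three of them to `w`: `c ↦ a, d ↦ b` on top, the swap `a ↔ c, b ↔ d` next, and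
`a ↦ c, b ↦ d` at the bottom. Each column then reads `acac`, `bdbd`, `aacc` or `bbdd` according
to its letter in `w`, and all four words are in `D^Col`.
-/

def PreservesRowPairs (f : Del → Del) : Prop :=
  ((f .a = .a ∧ f .b = .b) ∨ (f .a = .c ∧ f .b = .d)) ∧
  ((f .c = .a ∧ f .d = .b) ∨ (f .c = .c ∧ f .d = .d))

theorem rowStep.map {f : Del → Del} (hf : PreservesRowPairs f) {w w' : List Del}
    (h : rowStep w w') : rowStep (w.map f) (w'.map f) := by
  obtain ⟨u, v, hmid, rfl⟩ := h
  refine ⟨u.map f, v.map f, ?_, List.map_append⟩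
  rcases hmid with rfl | rfl
  · rcases hf.1 with ⟨h1, h2⟩ | ⟨h1, h2⟩ <;> simp [h1, h2]
  · rcases hf.2 with ⟨h1, h2⟩ | ⟨h1, h2⟩ <;> simp [h1, h2]

theorem DRow.map {f : Del → Del} (hf : PreservesRowPairs f) {w : List Del} (h : DRow w) :
    DRow (w.map f) :=
  h.lift (List.map f) (fun _ _ => rowStep.map hf)

def layer : ℕ → Del → Del
  | 0 => fun | .a => .a | .b => .b | .c => .a | .d => .b
  | 1 => fun | .a => .c | .b => .d | .c => .a | .d => .b
  | 2 => id
  | _ => fun | .a => .c | .b => .d | .c => .c | .d => .d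

theorem preservesRowPairs_layer (i : ℕ) : PreservesRowPairs (layer i) := by
  rcases i with _ | _ | _ | _ <;> simp [PreservesRowPairs, layer]

theorem colStep_cons_cons {x y : Del} (h : x = .a ∧ y = .c ∨ x = .b ∧ y = .d)
    (u v : List Del) : colStep (u ++ x :: y :: v) (u ++ v) := by
  rcases h with ⟨rfl, rfl⟩ | ⟨rfl, rfl⟩
  exacts [⟨u, v, Or.inl (by simp), rfl⟩, ⟨u, v, Or.inr (by simp), rfl⟩]

theorem DCol_layer_column (x : Del) : DCol ((List.range 4).map (layer · x)) := by
  cases x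
  case a | b =>
    refine .head (colStep_cons_cons (by simp [layer]) [] _) (.single ?_)
    exact colStep_cons_cons (by simp [layer]) [] []
  case c | d =>
    refine .head (colStep_cons_cons (by simp [layer]) [layer 0 _] [layer 3 _]) (.single ?_)
    exact colStep_cons_cons (by simp [layer]) [] []

theorem map_range_length_getD {α : Type*} (l : List α) (x₀ : α) :
    (List.range l.length).map (l.getD · x₀) = l :=
  List.ext_getElem (by simp) fun _ _ h => by simp [List.getElem?_eq_getElem h]

theorem row_layer_getD (w : List Del) (i : ℕ) :
    row (fun i j => layer i (w.getD j .a)) w.length i = w.map (layer i) := by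
  conv_rhs => rw [← map_range_length_getD w .a]
  simp [row, Function.comp_def]

/-- Every nonempty word of D^Row occurs as a row of a DC₁ picture; in fact
as the third row of a 4-row picture whose other rows are also in D^Row. -/
theorem row_language_saturates_DRow (w : List Del) (hw : DRow w) (hne : w ≠ []) :
    ∃ (w₁ w₂ w₃ : List Del), DRow w₁ ∧ DRow w₂ ∧ DRow w₃ ∧
      w₁.length = w.length ∧ w₂.length = w.length ∧ w₃.length = w.length ∧
      ∃ p : ℕ → ℕ → Del, DC 4 w.length p ∧
        row p w.length 0 = w₁ ∧ row p w.length 1 = w₂ ∧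
        row p w.length 2 = w ∧ row p w.length 3 = w₃ := by
  have hrow := row_layer_getD w
  have hrows (i : ℕ) : DRow (w.map (layer i)) := hw.map (preservesRowPairs_layer i)
  refine ⟨_, _, _, hrows 0, hrows 1, hrows 3, List.length_map _, List.length_map _,
    List.length_map _, fun i j => layer i (w.getD j .a),
    ⟨by norm_num, List.length_pos_iff.mpr hne, fun i _ => hrow i ▸ hrows i,
      fun j _ => DCol_layer_column (w.getD j .a)⟩,
    hrow 0, hrow 1, (hrow 2).trans w.map_id, hrow 3⟩
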